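/- arXiv:1601.01766 — 3 statements merged into one kernel-verified Lean document; each statement's English description precedes it below -/
import Mathlib

section
/- Kernel estimate on the inner region (inequality (3.9)): There exists a constant C > 0, depending only on n and s, such that for every x ∈ ℝⁿ ∖ {0}, every y > 0 and every index i ∈ {1,…,n}: | ∫_{{|ξ| < |x|/2}} y^{2s} (x_i − ξ_i) (y² + |x−ξ|²)^{−(n+2s)/2 − 1} (1 + |ξ|²)^{−(n−2s)/2} dξ | ≤ C y^{2s−1} |x|^{2s} (y² + |x|²)^{−(n+2s)/2}. -/
open MeasureTheory Filter Set Topology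

noncomputable section

abbrev Euc (n : ℕ) := EuclideanSpace ℝ (Fin n)

/-- Partial derivative of `w` in the `i`-th horizontal direction. -/
noncomputable def pdX (n : ℕ) (w : Euc n → ℝ → ℝ) (i : Fin n) (x : Euc n) (y : ℝ) : ℝ :=
  fderiv ℝ (fun x' => w x' y) x (EuclideanSpace.single i 1)

/-- Partial derivative of `w` in the vertical direction. -/
noncomputable def pdY (n : ℕ) (w : Euc n → ℝ → ℝ) (x : Euc n) (y : ℝ) : ℝ :=
  deriv (fun y' => w x y') y

/-- `(∇ₓ w)ᵀ M (∇ₓ w)`. -/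
noncomputable def quadA (n : ℕ) (M : Matrix (Fin n) (Fin n) ℝ) (w : Euc n → ℝ → ℝ)
    (x : Euc n) (y : ℝ) : ℝ :=
  ∑ i, ∑ j, M i j * pdX n w i x y * pdX n w j x y

/-- `(∇ w)ᵀ diag(M,1) (∇ w)`. -/
noncomputable def quadB (n : ℕ) (M : Matrix (Fin n) (Fin n) ℝ) (w : Euc n → ℝ → ℝ)
    (x : Euc n) (y : ℝ) : ℝ :=
  quadA n M w x y + (pdY n w x y) ^ 2

/-! On the ball `‖ξ‖ < ‖x‖/2` we have `‖x - ξ‖ ≥ ‖x‖/2`, so `y² + ‖x - ξ‖²` is comparable to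
`y² + ‖x‖²`; with `|xᵢ - ξᵢ| ≤ (y² + ‖x - ξ‖²)^(1/2)` and `y ≤ (y² + ‖x‖²)^(1/2)` the kernel is
bounded, uniformly in `ξ`, by a constant times `y^(2s-1) (y² + ‖x‖²)^(-(n+2s)/2)`.
What remains is the weight: `(1 + ‖ξ‖²)^(-(n-2s)/2) ≤ ‖ξ‖^(2s-n)`, whose integral over the ball
of radius `R` is `n |B₁| R^(2s) / (2s)` in polar coordinates. -/

open Metric

section Radial

variable {E F : Type*} [NormedAddCommGroup E] [NormedSpace ℝ E] [Nontrivial E]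
  [FiniteDimensional ℝ E] [MeasurableSpace E] [BorelSpace E] (μ : Measure E) [μ.IsAddHaarMeasure]
  [NormedAddCommGroup F] [NormedSpace ℝ F]

theorem setIntegral_ball_fun_norm_addHaar (f : ℝ → F) (r : ℝ) :
    ∫ x in ball (0 : E) r, f ‖x‖ ∂μ = Module.finrank ℝ E • μ.real (ball 0 1) •
      ∫ y in Ioo 0 r, y ^ (Module.finrank ℝ E - 1) • f y := by
  have hball : ∫ x in ball (0 : E) r, f ‖x‖ ∂μ = ∫ x, (Iio r).indicator f ‖x‖ ∂μ := by
    rw [← integral_indicator measurableSet_ball]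
    congr 1 with x
    by_cases hx : ‖x‖ < r <;> simp [indicator, hx]
  have hIoi : ∫ y in Ioi 0, y ^ (Module.finrank ℝ E - 1) • (Iio r).indicator f y =
      ∫ y in Ioi 0, (Iio r).indicator (fun y ↦ y ^ (Module.finrank ℝ E - 1) • f y) y := by
    congr 1 with y
    by_cases hy : y < r <;> simp [indicator, hy]
  rw [hball, integral_fun_norm_addHaar μ, hIoi, setIntegral_indicator measurableSet_Iio,
    Ioi_inter_Iio]

theorem setIntegral_ball_one_add_norm_sq_rpow_le {s R : ℝ} (hs : 0 < s)
    (hsd : 2 * s ≤ Module.finrank ℝ E) (hR : 0 ≤ R) :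
    ∫ x in ball (0 : E) R, (1 + ‖x‖ ^ 2) ^ (-(((Module.finrank ℝ E : ℝ) - 2 * s) / 2)) ∂μ ≤
      Module.finrank ℝ E * μ.real (ball 0 1) / (2 * s) * R ^ (2 * s) := by
  set d := Module.finrank ℝ E
  have hd : 1 ≤ d := Module.finrank_pos
  have hpointwise : ∀ y ∈ Ioo (0 : ℝ) R,
      y ^ (d - 1) • (1 + y ^ 2) ^ (-(((d : ℝ) - 2 * s) / 2)) ≤ y ^ (2 * s - 1) := by
    rintro y ⟨hy, -⟩
    calc y ^ (d - 1) • (1 + y ^ 2) ^ (-(((d : ℝ) - 2 * s) / 2))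
        ≤ y ^ (d - 1) * (y ^ 2) ^ (-(((d : ℝ) - 2 * s) / 2)) := by
          rw [smul_eq_mul]
          refine mul_le_mul_of_nonneg_left ?_ (by positivity)
          exact Real.rpow_le_rpow_of_nonpos (by positivity) (by linarith) (by linarith)
      _ = y ^ (2 * s - 1) := by
          rw [← Real.rpow_natCast, ← Real.rpow_natCast, ← Real.rpow_mul hy.le,
            ← Real.rpow_add hy, Nat.cast_sub hd]
          congr 1
          push_cast
          ring
  have hintegral : ∫ y in Ioo 0 R, y ^ (2 * s - 1) = R ^ (2 * s) / (2 * s) := by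
    rw [← integral_Ioc_eq_integral_Ioo, ← intervalIntegral.integral_of_le hR,
      integral_rpow (Or.inl (by linarith)), sub_add_cancel, Real.zero_rpow (by positivity),
      sub_zero]
  have hradial : ∫ y in Ioo 0 R, y ^ (d - 1) • (1 + y ^ 2) ^ (-(((d : ℝ) - 2 * s) / 2)) ≤
      R ^ (2 * s) / (2 * s) := by
    rw [← hintegral]
    refine integral_mono_of_nonneg ((ae_restrict_iff' measurableSet_Ioo).2
      (Eventually.of_forall fun y hy ↦ ?_)) ?_
      ((ae_restrict_iff' measurableSet_Ioo).2 (Eventually.of_forall hpointwise))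
    · have := hy.1
      positivity
    · exact (intervalIntegral.intervalIntegrable_rpow' (by linarith)).1.mono_set
        Ioo_subset_Ioc_self
  rw [setIntegral_ball_fun_norm_addHaar μ (fun r ↦ (1 + r ^ 2) ^ (-(((d : ℝ) - 2 * s) / 2))),
    nsmul_eq_mul, smul_eq_mul]
  calc (d : ℝ) * (μ.real (ball 0 1) * _)
      ≤ d * (μ.real (ball 0 1) * (R ^ (2 * s) / (2 * s))) := by gcongr
    _ = _ := by ring

end Radial

theorem rpow_mul_rpow_sub_half_le {y B : ℝ} (hy : 0 < y) (hyB : y ^ 2 ≤ B) (p a : ℝ) :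
    y ^ p * B ^ (-a - 1 / 2) ≤ y ^ (p - 1) * B ^ (-a) := by
  have hB : 0 < B := lt_of_lt_of_le (by positivity) hyB
  have hyB' : y * B ^ (-(1 / 2) : ℝ) ≤ 1 := by
    rw [Real.rpow_neg hB.le, ← div_eq_mul_inv, div_le_one (by positivity), ← Real.sqrt_eq_rpow]
    exact Real.le_sqrt_of_sq_le hyB
  calc y ^ p * B ^ (-a - 1 / 2) = y ^ (p - 1) * B ^ (-a) * (y * B ^ (-(1 / 2) : ℝ)) := by
        rw [Real.rpow_sub_one hy.ne', sub_eq_add_neg (-a), Real.rpow_add hB]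
        field_simp
    _ ≤ y ^ (p - 1) * B ^ (-a) := mul_le_of_le_one_right (by positivity) hyB'

section Kernel

variable {E : Type*} [SeminormedAddCommGroup E]

theorem add_sq_norm_le_four_mul_add_sq_norm_sub {u v : E} (hv : ‖v‖ ≤ ‖u‖ / 2) (y : ℝ) :
    y ^ 2 + ‖u‖ ^ 2 ≤ 4 * (y ^ 2 + ‖u - v‖ ^ 2) := by
  have : ‖u‖ / 2 ≤ ‖u - v‖ := by linarith [norm_sub_norm_le u v]
  nlinarith [sq_nonneg y, norm_nonneg u]

theorem norm_sub_mul_rpow_le {u v : E} (hv : ‖v‖ ≤ ‖u‖ / 2) {y a : ℝ} (hy : 0 < y)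
    (ha : -(1 / 2) ≤ a) :
    ‖u - v‖ * (y ^ 2 + ‖u - v‖ ^ 2) ^ (-a - 1) ≤
      4 ^ (a + 1 / 2) * (y ^ 2 + ‖u‖ ^ 2) ^ (-a - 1 / 2) := by
  have hP : 0 < y ^ 2 + ‖u - v‖ ^ 2 := by positivity
  set P := y ^ 2 + ‖u - v‖ ^ 2
  have hnorm : ‖u - v‖ ≤ P ^ (1 / 2 : ℝ) := by
    rw [← Real.sqrt_eq_rpow]
    exact Real.le_sqrt_of_sq_le (by linarith [sq_nonneg y])
  calc ‖u - v‖ * P ^ (-a - 1) ≤ P ^ (1 / 2 : ℝ) * P ^ (-a - 1) := by gcongr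
    _ = P ^ (-a - 1 / 2) := by rw [← Real.rpow_add hP]; ring_nf
    _ ≤ ((y ^ 2 + ‖u‖ ^ 2) / 4) ^ (-a - 1 / 2) :=
        Real.rpow_le_rpow_of_nonpos (by positivity)
          (by linarith [add_sq_norm_le_four_mul_add_sq_norm_sub hv y]) (by linarith)
    _ = 4 ^ (a + 1 / 2) * (y ^ 2 + ‖u‖ ^ 2) ^ (-a - 1 / 2) := by
        rw [Real.div_rpow (by positivity) (by norm_num), div_eq_mul_inv,
          ← Real.rpow_neg (by norm_num), mul_comm]
        ring_nf

end Kernel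

theorem abs_setIntegral_ball_kernel_le {ι : Type*} [Fintype ι] (x : EuclideanSpace ℝ ι) (i : ι)
    {y a : ℝ} (hy : 0 < y) (ha : -(1 / 2) ≤ a) (p m : ℝ) :
    |∫ ξ in ball (0 : EuclideanSpace ℝ ι) (‖x‖ / 2),
        y ^ p * (x i - ξ i) * (y ^ 2 + ‖x - ξ‖ ^ 2) ^ (-a - 1) * (1 + ‖ξ‖ ^ 2) ^ m| ≤
      y ^ p * (4 ^ (a + 1 / 2) * (y ^ 2 + ‖x‖ ^ 2) ^ (-a - 1 / 2)) *
        ∫ ξ in ball (0 : EuclideanSpace ℝ ι) (‖x‖ / 2), (1 + ‖ξ‖ ^ 2) ^ m := by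
  have hweight : IntegrableOn (fun ξ : EuclideanSpace ℝ ι ↦ (1 + ‖ξ‖ ^ 2) ^ m)
      (ball 0 (‖x‖ / 2)) :=
    ((Continuous.rpow_const (by fun_prop) fun ξ ↦ Or.inl (by positivity)).locallyIntegrable
      |>.integrableOn_isCompact (isCompact_closedBall 0 _)).mono_set ball_subset_closedBall
  rw [← Real.norm_eq_abs, ← integral_const_mul]
  refine norm_integral_le_of_norm_le (hweight.const_mul _)
    ((ae_restrict_iff' measurableSet_ball).2 (Eventually.of_forall fun ξ hξ ↦ ?_))
  have hcoord : |x i - ξ i| ≤ ‖x - ξ‖ := PiLp.norm_apply_le (x - ξ) i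
  have hP : 0 < y ^ 2 + ‖x - ξ‖ ^ 2 := by positivity
  calc _ = y ^ p * (|x i - ξ i| * (y ^ 2 + ‖x - ξ‖ ^ 2) ^ (-a - 1)) * (1 + ‖ξ‖ ^ 2) ^ m := by
        rw [Real.norm_eq_abs, abs_mul, abs_mul, abs_mul, abs_of_pos (Real.rpow_pos_of_pos hy p),
          abs_of_pos (Real.rpow_pos_of_pos hP _),
          abs_of_pos (Real.rpow_pos_of_pos (by positivity) m)]
        ring
    _ ≤ y ^ p * (‖x - ξ‖ * (y ^ 2 + ‖x - ξ‖ ^ 2) ^ (-a - 1)) * (1 + ‖ξ‖ ^ 2) ^ m := by gcongr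
    _ ≤ _ := by
        gcongr y ^ p * ?_ * _
        exact norm_sub_mul_rpow_le (mem_ball_zero_iff.1 hξ).le hy ha

theorem kernel_estimate_inner_region_general
    (n : ℕ) (s : ℝ) (hs : s ∈ Ioo (0:ℝ) 1) (hns : 2 * s < (n:ℝ)) :
    ∃ C > (0:ℝ), ∀ x : Euc n, x ≠ 0 → ∀ y : ℝ, 0 < y → ∀ i : Fin n,
      |∫ ξ in {ξ : Euc n | ‖ξ‖ < ‖x‖ / 2},
          y ^ (2*s) * (x i - ξ i) * (y ^ 2 + ‖x - ξ‖ ^ 2) ^ (-(((n:ℝ) + 2*s) / 2) - 1) *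
            (1 + ‖ξ‖ ^ 2) ^ (-(((n:ℝ) - 2*s) / 2))|
        ≤ C * y ^ (2*s - 1) * ‖x‖ ^ (2*s) * (y ^ 2 + ‖x‖ ^ 2) ^ (-(((n:ℝ) + 2*s) / 2)) := by
  obtain ⟨hs0, -⟩ := hs
  have hn : (0 : ℝ) < n := by linarith
  have : NeZero n := ⟨by exact_mod_cast hn.ne'⟩
  have ha : 0 ≤ ((n : ℝ) + 2 * s) / 2 := by positivity
  set a := ((n : ℝ) + 2 * s) / 2
  have hV : 0 < volume.real (ball (0 : Euc n) 1) :=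
    ENNReal.toReal_pos (measure_ball_pos _ _ one_pos).ne' measure_ball_lt_top.ne
  set V := volume.real (ball (0 : Euc n) 1)
  refine ⟨n * V / (2 * s) * 4 ^ (a + 1 / 2), by positivity, fun x _ y hy i ↦ ?_⟩
  have hweight := setIntegral_ball_one_add_norm_sq_rpow_le (volume : Measure (Euc n)) hs0
    (by simpa using hns.le) (R := ‖x‖ / 2) (by positivity)
  rw [finrank_euclideanSpace_fin] at hweight
  set B := y ^ 2 + ‖x‖ ^ 2
  rw [show {ξ : Euc n | ‖ξ‖ < ‖x‖ / 2} = ball 0 (‖x‖ / 2) by ext; simp]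
  calc _ ≤ y ^ (2 * s) * (4 ^ (a + 1 / 2) * B ^ (-a - 1 / 2)) *
        ∫ ξ in ball (0 : Euc n) (‖x‖ / 2), (1 + ‖ξ‖ ^ 2) ^ (-(((n : ℝ) - 2 * s) / 2)) :=
        abs_setIntegral_ball_kernel_le x i hy (by linarith) _ _
    _ ≤ y ^ (2 * s) * (4 ^ (a + 1 / 2) * B ^ (-a - 1 / 2)) *
          (n * V / (2 * s) * (‖x‖ / 2) ^ (2 * s)) := by gcongr
    _ = n * V / (2 * s) * 4 ^ (a + 1 / 2) * (y ^ (2 * s) * B ^ (-a - 1 / 2)) *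
          (‖x‖ / 2) ^ (2 * s) := by ring
    _ ≤ n * V / (2 * s) * 4 ^ (a + 1 / 2) * (y ^ (2 * s - 1) * B ^ (-a)) * ‖x‖ ^ (2 * s) := by
        gcongr _ * ?_ * ?_
        · exact rpow_mul_rpow_sub_half_le hy (le_add_of_nonneg_right (sq_nonneg ‖x‖)) _ _
        · exact Real.rpow_le_rpow (by positivity) (by linarith [norm_nonneg x]) (by positivity)
    _ = _ := by ring

/-- Kernel estimate on the inner region (inequality (3.9)). -/
theorem kernel_estimate_inner_region
    (n : ℕ) (hn : 1 ≤ n) (s : ℝ) (hs : s ∈ Ioo (0:ℝ) 1) (hns : 2 * s < (n:ℝ)) :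
    ∃ C > (0:ℝ), ∀ x : Euc n, x ≠ 0 → ∀ y : ℝ, 0 < y → ∀ i : Fin n,
      |∫ ξ in {ξ : Euc n | ‖ξ‖ < ‖x‖ / 2},
          y ^ (2*s) * (x i - ξ i) * (y ^ 2 + ‖x - ξ‖ ^ 2) ^ (-(((n:ℝ) + 2*s) / 2) - 1) *
            (1 + ‖ξ‖ ^ 2) ^ (-(((n:ℝ) - 2*s) / 2))|
        ≤ C * y ^ (2*s - 1) * ‖x‖ ^ (2*s) * (y ^ 2 + ‖x‖ ^ 2) ^ (-(((n:ℝ) + 2*s) / 2)) :=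
  kernel_estimate_inner_region_general n s hs hns
end
end

section
/- Kernel estimate on the middle region for large y (inequality (3.11)): There exists a constant C > 0, depending only on n and s, such that for every x ∈ ℝⁿ ∖ {0}, every y ≥ |x| and every index i ∈ {1,…,n}: | ∫_{{|x|/2 < |ξ| < 3|x|/2}} y^{2s} (x_i − ξ_i) (y² + |x−ξ|²)^{−(n+2s)/2 − 1} (1 + |ξ|²)^{−(n−2s)/2} dξ | ≤ C y^{−(n−2s)/2 − 1} |x|^{−(n−2s)/2}. -/
open MeasureTheory Filter Set Topology

noncomputable section

/-! On the annulus `‖x‖/2 < ‖ξ‖ < 3‖x‖/2` the integrand is bounded pointwise by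
`y^(-n-1) ‖x‖^(2s-n)` (up to a constant), using `|xᵢ - ξᵢ| ≤ 5y/2`, `y² + ‖x-ξ‖² ≥ y²` and
`1 + ‖ξ‖² ≥ ‖x‖²/4`, while the annulus has volume `O(‖x‖ⁿ)`. The product is
`y^(-n-1) ‖x‖^(2s)`, which is at most `y^(-(n-2s)/2-1) ‖x‖^(-(n-2s)/2)` since `‖x‖ ≤ y`. -/

lemma rpow_sq_add_sq_le {y : ℝ} (hy : 0 < y) (r : ℝ) {e : ℝ} (he : e ≤ 0) :
    (y ^ 2 + r ^ 2) ^ e ≤ y ^ (2 * e) :=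
  calc (y ^ 2 + r ^ 2) ^ e ≤ (y ^ 2) ^ e :=
        Real.rpow_le_rpow_of_nonpos (by positivity) (le_add_of_nonneg_right (sq_nonneg r)) he
    _ = y ^ (2 * e) := by rw [← Real.rpow_natCast_mul hy.le]; norm_num

lemma rpow_add_mul_rpow_sub_le {a b : ℝ} (ha : 0 < a) (hab : a ≤ b) {t : ℝ} (ht : 0 ≤ t)
    (p q : ℝ) : a ^ (p + t) * b ^ (q - t) ≤ a ^ p * b ^ q := by
  have hb : 0 < b := ha.trans_le hab
  rw [Real.rpow_add ha, Real.rpow_sub hb]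
  calc a ^ p * a ^ t * (b ^ q / b ^ t) = a ^ p * b ^ q * (a ^ t / b ^ t) := by ring
    _ ≤ a ^ p * b ^ q * 1 := by
        gcongr
        exact div_le_one_of_le₀ (Real.rpow_le_rpow ha.le hab ht) (by positivity)
    _ = a ^ p * b ^ q := mul_one _

lemma measureReal_le_of_subset_ball {E : Type*} [NormedAddCommGroup E] [NormedSpace ℝ E]
    [MeasurableSpace E] [BorelSpace E] [FiniteDimensional ℝ E] (μ : Measure E)
    [μ.IsAddHaarMeasure] {S : Set E} {r : ℝ} (hr : 0 < r) (hS : S ⊆ Metric.ball 0 r) :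
    μ.real S ≤ r ^ Module.finrank ℝ E * μ.real (Metric.ball 0 1) := by
  refine (measureReal_mono hS measure_ball_lt_top.ne).trans_eq ?_
  rw [measureReal_def, Measure.addHaar_ball_of_pos μ 0 hr, ENNReal.toReal_mul,
    ENNReal.toReal_ofReal (by positivity), measureReal_def]

lemma abs_kernel_le_of_mem_annulus {n : ℕ} {s : ℝ} (hs : 0 < s) (hns : 2 * s < n)
    {x ξ : Euc n} {y : ℝ} (hxy : ‖x‖ ≤ y) (hξ : ‖x‖ / 2 < ‖ξ‖ ∧ ‖ξ‖ < 3 * ‖x‖ / 2)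
    (i : Fin n) :
    |y ^ (2*s) * (x i - ξ i) * (y ^ 2 + ‖x - ξ‖ ^ 2) ^ (-(((n:ℝ) + 2*s) / 2) - 1) *
        (1 + ‖ξ‖ ^ 2) ^ (-(((n:ℝ) - 2*s) / 2))|
      ≤ 5 / 2 * 2 ^ ((n:ℝ) - 2*s) * (y ^ (-(n:ℝ) - 1) * ‖x‖ ^ (2*s - n)) := by
  obtain ⟨hlow, hup⟩ := hξ
  have hx : 0 < ‖x‖ := by linarith [norm_nonneg ξ]
  have hy : 0 < y := hx.trans_le hxy
  set e₁ : ℝ := -(((n:ℝ) + 2*s) / 2) - 1 with he₁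
  set e₂ : ℝ := -(((n:ℝ) - 2*s) / 2) with he₂
  have hcoord : |x i - ξ i| ≤ 5 / 2 * y :=
    calc |x i - ξ i| = ‖(x - ξ) i‖ := by simp
      _ ≤ ‖x - ξ‖ := PiLp.norm_apply_le _ _
      _ ≤ ‖x‖ + ‖ξ‖ := norm_sub_le _ _
      _ ≤ 5 / 2 * y := by linarith
  have hvertical : (y ^ 2 + ‖x - ξ‖ ^ 2) ^ e₁ ≤ y ^ (2 * e₁) :=
    rpow_sq_add_sq_le hy _ (by linarith)
  have hweight : (1 + ‖ξ‖ ^ 2) ^ e₂ ≤ (‖x‖ / 2) ^ (2 * e₂) :=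
    calc (1 + ‖ξ‖ ^ 2) ^ e₂ = (‖ξ‖ ^ 2 + 1 ^ 2) ^ e₂ := by rw [one_pow, add_comm]
      _ ≤ ‖ξ‖ ^ (2 * e₂) := rpow_sq_add_sq_le (by linarith) 1 (by linarith)
      _ ≤ (‖x‖ / 2) ^ (2 * e₂) :=
        Real.rpow_le_rpow_of_nonpos (by positivity) hlow.le (by linarith)
  have hy_exp : y ^ (-(n:ℝ) - 1) = y ^ (2*s) * y * y ^ (2 * e₁) := by
    rw [show -(n:ℝ) - 1 = 2*s + 1 + 2 * e₁ by ring, Real.rpow_add hy, Real.rpow_add hy,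
      Real.rpow_one]
  have hx_exp : (‖x‖ / 2) ^ (2 * e₂) = 2 ^ ((n:ℝ) - 2*s) * ‖x‖ ^ (2*s - n) := by
    rw [show 2 * e₂ = 2*s - n by ring, Real.div_rpow hx.le zero_le_two,
      show (n:ℝ) - 2*s = -(2*s - n) by ring, Real.rpow_neg zero_le_two]
    ring
  rw [abs_mul, abs_mul, abs_mul, abs_of_pos (Real.rpow_pos_of_pos hy _),
    abs_of_pos (Real.rpow_pos_of_pos (by positivity) _),
    abs_of_pos (Real.rpow_pos_of_pos (by positivity) _), hy_exp]
  calc _ ≤ y ^ (2*s) * (5 / 2 * y) * y ^ (2 * e₁) * (‖x‖ / 2) ^ (2 * e₂) := by gcongr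
    _ = _ := by rw [hx_exp]; ring

theorem kernel_estimate_middle_region_large_y_general
    (n : ℕ) (s : ℝ) (hs : s ∈ Ioo (0:ℝ) 1) (hns : 2 * s < (n:ℝ)) :
    ∃ C > (0:ℝ), ∀ x : Euc n, x ≠ 0 → ∀ y : ℝ, ‖x‖ ≤ y → ∀ i : Fin n,
      |∫ ξ in {ξ : Euc n | ‖x‖ / 2 < ‖ξ‖ ∧ ‖ξ‖ < 3 * ‖x‖ / 2},
          y ^ (2*s) * (x i - ξ i) * (y ^ 2 + ‖x - ξ‖ ^ 2) ^ (-(((n:ℝ) + 2*s) / 2) - 1) *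
            (1 + ‖ξ‖ ^ 2) ^ (-(((n:ℝ) - 2*s) / 2))|
        ≤ C * y ^ (-(((n:ℝ) - 2*s) / 2) - 1) * ‖x‖ ^ (-(((n:ℝ) - 2*s) / 2)) := by
  set c := volume.real (Metric.ball (0 : Euc n) 1)
  have hc : 0 < c := ENNReal.toReal_pos (Metric.measure_ball_pos volume 0 one_pos).ne'
    measure_ball_lt_top.ne
  set K : ℝ := 5 / 2 * 2 ^ ((n:ℝ) - 2*s)
  refine ⟨K * (3 / 2) ^ n * c, by positivity, fun x hx y hxy i => ?_⟩
  have hx0 : 0 < ‖x‖ := norm_pos_iff.mpr hx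
  have hannulus : {ξ : Euc n | ‖x‖ / 2 < ‖ξ‖ ∧ ‖ξ‖ < 3 * ‖x‖ / 2} ⊆
      Metric.ball 0 (3 / 2 * ‖x‖) := fun ξ hξ => by
    rw [mem_ball_zero_iff]; linarith [hξ.2]
  have hvol := measureReal_le_of_subset_ball volume (by positivity) hannulus
  rw [finrank_euclideanSpace_fin] at hvol
  rw [← Real.norm_eq_abs]
  calc _ ≤ K * (y ^ (-(n:ℝ) - 1) * ‖x‖ ^ (2*s - n)) *
        volume.real {ξ : Euc n | ‖x‖ / 2 < ‖ξ‖ ∧ ‖ξ‖ < 3 * ‖x‖ / 2} :=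
        norm_setIntegral_le_of_norm_le_const
          ((measure_mono hannulus).trans_lt measure_ball_lt_top)
          (fun ξ hξ => abs_kernel_le_of_mem_annulus hs.1 hns hxy hξ i)
    _ ≤ K * (y ^ (-(n:ℝ) - 1) * ‖x‖ ^ (2*s - n)) * ((3 / 2 * ‖x‖) ^ n * c) :=
        mul_le_mul_of_nonneg_left hvol (by have := hx0.trans_le hxy; positivity)
    _ = K * (3 / 2) ^ n * c * (‖x‖ ^ (2*s - n) * ‖x‖ ^ (n:ℝ) * y ^ (-(n:ℝ) - 1)) := by
        rw [Real.rpow_natCast]; ring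
    _ = K * (3 / 2) ^ n * c * (‖x‖ ^ (-(((n:ℝ) - 2*s) / 2) + ((n:ℝ) + 2*s) / 2) *
          y ^ (-(((n:ℝ) - 2*s) / 2) - 1 - ((n:ℝ) + 2*s) / 2)) := by
        rw [← Real.rpow_add hx0]; ring_nf
    _ ≤ K * (3 / 2) ^ n * c * (‖x‖ ^ (-(((n:ℝ) - 2*s) / 2)) *
          y ^ (-(((n:ℝ) - 2*s) / 2) - 1)) :=
        mul_le_mul_of_nonneg_left (rpow_add_mul_rpow_sub_le hx0 hxy (by linarith [hs.1]) _ _)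
          (by positivity)
    _ = _ := by ring

/-- Kernel estimate on the middle region for large `y` (inequality (3.11)). -/
theorem kernel_estimate_middle_region_large_y
    (n : ℕ) (hn : 1 ≤ n) (s : ℝ) (hs : s ∈ Ioo (0:ℝ) 1) (hns : 2 * s < (n:ℝ)) :
    ∃ C > (0:ℝ), ∀ x : Euc n, x ≠ 0 → ∀ y : ℝ, ‖x‖ ≤ y → ∀ i : Fin n,
      |∫ ξ in {ξ : Euc n | ‖x‖ / 2 < ‖ξ‖ ∧ ‖ξ‖ < 3 * ‖x‖ / 2},
          y ^ (2*s) * (x i - ξ i) * (y ^ 2 + ‖x - ξ‖ ^ 2) ^ (-(((n:ℝ) + 2*s) / 2) - 1) *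
            (1 + ‖ξ‖ ^ 2) ^ (-(((n:ℝ) - 2*s) / 2))|
        ≤ C * y ^ (-(((n:ℝ) - 2*s) / 2) - 1) * ‖x‖ ^ (-(((n:ℝ) - 2*s) / 2)) :=
  kernel_estimate_middle_region_large_y_general n s hs hns
end
end

section
/- Poisson integral of the differentiated bubble on the middle region (inequality (3.12)): There exists a constant C > 0, depending only on n and s, such that for every x ∈ ℝⁿ ∖ {0}, every y > 0 and every index i ∈ {1,…,n}: | ∫_{{|x|/2 < |ξ| < 3|x|/2}} P_y^s(x − ξ) · ∂_{ξ_i} u₁(ξ) dξ | ≤ C (1 + |x|²)^{−(n−2s+1)/2}, where u₁(ξ) = (1 + |ξ|²)^{−(n−2s)/2} and P_y^s(x) = c_{n,s} y^{2s} (|x|² + y²)^{−(n+2s)/2}. -/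
open MeasureTheory Filter Set Topology

noncomputable section

/-- The standard bubble `u₁`. -/
noncomputable def u1 (n : ℕ) (s : ℝ) (ξ : Euc n) : ℝ :=
  (1 + ‖ξ‖ ^ 2) ^ (-(((n:ℝ) - 2*s) / 2))

/-!
The kernel `ξ ↦ P_y^s(x - ξ)` is a probability density (that is the normalisation of `c_{n,s}`),
so the integral is bounded by the supremum of `|∂ᵢu₁|` over the annulus. The chain rule gives
`|∂ᵢu₁(ξ)| ≤ (n - 2s) (1 + |ξ|²)^(-(n - 2s + 1)/2)`, and on the annulus `|ξ| > |x|/2`, so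
`1 + |ξ|² ≥ (1 + |x|²)/4`.
-/

section

variable {E : Type*} [NormedAddCommGroup E] [InnerProductSpace ℝ E]

theorem hasFDerivAt_one_add_norm_sq_rpow (q : ℝ) (ξ : E) :
    HasFDerivAt (fun ξ : E => (1 + ‖ξ‖ ^ 2) ^ (-q))
      ((-2 * q * (1 + ‖ξ‖ ^ 2) ^ (-q - 1)) • innerSL ℝ ξ) ξ := by
  have hsq : HasFDerivAt (fun ξ : E => 1 + ‖ξ‖ ^ 2) ((2 : ℝ) • innerSL ℝ ξ) ξ := by
    simpa [two_smul] using ((hasFDerivAt_id ξ).norm_sq).const_add 1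
  convert hsq.rpow_const (p := -q) (Or.inl (by positivity)) using 1
  rw [smul_smul]
  ring_nf

theorem norm_fderiv_one_add_norm_sq_rpow_le (q : ℝ) (ξ : E) :
    ‖fderiv ℝ (fun ξ : E => (1 + ‖ξ‖ ^ 2) ^ (-q)) ξ‖ ≤
      2 * |q| * (1 + ‖ξ‖ ^ 2) ^ (-q - 1 / 2) := by
  set t := 1 + ‖ξ‖ ^ 2
  have ht : 0 < t := by positivity
  have hnorm_le : ‖ξ‖ ≤ t ^ (1 / 2 : ℝ) := by
    rw [← Real.sqrt_eq_rpow]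
    exact Real.le_sqrt_of_sq_le (by simp [t])
  rw [(hasFDerivAt_one_add_norm_sq_rpow q ξ).fderiv, norm_smul, innerSL_apply_norm,
    norm_mul, norm_mul, Real.norm_eq_abs, Real.norm_eq_abs,
    Real.norm_of_nonneg (Real.rpow_nonneg ht.le _)]
  calc |-2| * |q| * t ^ (-q - 1) * ‖ξ‖
      ≤ 2 * |q| * t ^ (-q - 1) * t ^ (1 / 2 : ℝ) := by
        rw [abs_neg, abs_two]
        gcongr
    _ = 2 * |q| * t ^ (-q - 1 / 2) := by
        rw [show -q - 1 / 2 = (-q - 1) + 1 / 2 by ring, Real.rpow_add ht]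
        ring

end

theorem one_add_sq_rpow_neg_le {r ρ e : ℝ} (he : 0 ≤ e) (hr : 0 ≤ r) (hrρ : r ≤ 2 * ρ) :
    (1 + ρ ^ 2) ^ (-e) ≤ 4 ^ e * (1 + r ^ 2) ^ (-e) := by
  have hcompare : (1 + r ^ 2) / 4 ≤ 1 + ρ ^ 2 := by nlinarith
  calc (1 + ρ ^ 2) ^ (-e) ≤ ((1 + r ^ 2) / 4) ^ (-e) :=
        Real.rpow_le_rpow_of_nonpos (by positivity) hcompare (by linarith)
    _ = 4 ^ e * (1 + r ^ 2) ^ (-e) := by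
        rw [Real.div_rpow (by positivity) (by norm_num), Real.rpow_neg (by norm_num : (0:ℝ) ≤ 4)]
        field_simp

theorem MeasureTheory.abs_setIntegral_mul_le {α : Type*} [MeasurableSpace α] {μ : Measure α}
    {g f : α → ℝ} {S : Set α} {M : ℝ} (hS : MeasurableSet S) (hg : Integrable g μ)
    (hg_nonneg : ∀ a, 0 ≤ g a) (hM : 0 ≤ M) (hf : ∀ a ∈ S, |f a| ≤ M) :
    |∫ a in S, g a * f a ∂μ| ≤ M * ∫ a, g a ∂μ := by
  have hpointwise : ∀ a ∈ S, |g a * f a| ≤ M * g a := fun a ha => by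
    rw [abs_mul, abs_of_nonneg (hg_nonneg a), mul_comm M]
    exact mul_le_mul_of_nonneg_left (hf a ha) (hg_nonneg a)
  calc |∫ a in S, g a * f a ∂μ| ≤ ∫ a in S, |g a * f a| ∂μ := abs_integral_le_integral_abs
    _ ≤ ∫ a in S, M * g a ∂μ :=
        integral_mono_of_nonneg (ae_of_all _ fun a => abs_nonneg _) (hg.const_mul M).restrict
          ((ae_restrict_iff' hS).mpr (ae_of_all _ hpointwise))
    _ = M * ∫ a in S, g a ∂μ := integral_const_mul M _
    _ ≤ M * ∫ a, g a ∂μ :=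
        mul_le_mul_of_nonneg_left (setIntegral_le_integral hg (ae_of_all _ hg_nonneg)) hM

theorem MeasureTheory.Integrable.of_mul_integral_eq_one {α : Type*} [MeasurableSpace α]
    {μ : Measure α} {f : α → ℝ} {c : ℝ} (h : c * ∫ a, f a ∂μ = 1) : Integrable f μ :=
  Integrable.of_integral_ne_zero fun h0 => by simp [h0] at h

theorem abs_fderiv_u1_single_le (n : ℕ) (s : ℝ) (ξ : Euc n) (i : Fin n) :
    |fderiv ℝ (u1 n s) ξ (EuclideanSpace.single i 1)| ≤
      2 * |((n:ℝ) - 2*s) / 2| * (1 + ‖ξ‖ ^ 2) ^ (-(((n:ℝ) - 2*s + 1) / 2)) := by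
  have hbound : ‖fderiv ℝ (u1 n s) ξ‖ ≤
      2 * |((n:ℝ) - 2*s) / 2| * (1 + ‖ξ‖ ^ 2) ^ (-(((n:ℝ) - 2*s) / 2) - 1 / 2) :=
    norm_fderiv_one_add_norm_sq_rpow_le _ ξ
  rw [show -(((n:ℝ) - 2*s) / 2) - 1 / 2 = -(((n:ℝ) - 2*s + 1) / 2) by ring] at hbound
  calc |fderiv ℝ (u1 n s) ξ (EuclideanSpace.single i 1)|
      ≤ ‖fderiv ℝ (u1 n s) ξ‖ * ‖EuclideanSpace.single i (1:ℝ)‖ :=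
        (Real.norm_eq_abs _).symm.trans_le (ContinuousLinearMap.le_opNorm _ _)
    _ ≤ _ := by rwa [PiLp.norm_single, norm_one, mul_one]

theorem abs_fderiv_u1_single_le_of_half_lt_norm {n : ℕ} {s : ℝ} (hs : 2 * s ≤ n + 1)
    {x ξ : Euc n} (hξ : ‖x‖ / 2 < ‖ξ‖) (i : Fin n) :
    |fderiv ℝ (u1 n s) ξ (EuclideanSpace.single i 1)| ≤
      2 * |((n:ℝ) - 2*s) / 2| * 4 ^ (((n:ℝ) - 2*s + 1) / 2) *
        (1 + ‖x‖ ^ 2) ^ (-(((n:ℝ) - 2*s + 1) / 2)) := by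
  have hannulus := one_add_sq_rpow_neg_le (e := ((n:ℝ) - 2*s + 1) / 2) (by linarith)
    (norm_nonneg x) (by linarith : ‖x‖ ≤ 2 * ‖ξ‖)
  calc _ ≤ 2 * |((n:ℝ) - 2*s) / 2| * (1 + ‖ξ‖ ^ 2) ^ (-(((n:ℝ) - 2*s + 1) / 2)) :=
        abs_fderiv_u1_single_le n s ξ i
    _ ≤ _ := by
        rw [mul_assoc _ (4 ^ _)]
        gcongr

theorem poisson_integral_differentiated_bubble_general
    (n : ℕ) (s : ℝ) (hns : 2 * s < (n:ℝ))
    (cns : ℝ) (hcns : 0 < cns)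
    (hnorm : ∀ y : ℝ, 0 < y →
      cns * (∫ x : Euc n, y ^ (2*s) * (‖x‖ ^ 2 + y ^ 2) ^ (-(((n:ℝ) + 2*s) / 2))) = 1) :
    ∃ C > (0:ℝ), ∀ x : Euc n, x ≠ 0 → ∀ y : ℝ, 0 < y → ∀ i : Fin n,
      |∫ ξ in {ξ : Euc n | ‖x‖ / 2 < ‖ξ‖ ∧ ‖ξ‖ < 3 * ‖x‖ / 2},
          (cns * y ^ (2*s) * (‖x - ξ‖ ^ 2 + y ^ 2) ^ (-(((n:ℝ) + 2*s) / 2))) *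
            fderiv ℝ (u1 n s) ξ (EuclideanSpace.single i 1)|
        ≤ C * (1 + ‖x‖ ^ 2) ^ (-(((n:ℝ) - 2*s + 1) / 2)) := by
  refine ⟨2 * |((n:ℝ) - 2*s) / 2| * 4 ^ (((n:ℝ) - 2*s + 1) / 2),
    mul_pos (mul_pos two_pos (abs_pos.2 (by linarith))) (by positivity), ?_⟩
  intro x _ y hy i
  set P : Euc n → ℝ := fun z => y ^ (2*s) * (‖z‖ ^ 2 + y ^ 2) ^ (-(((n:ℝ) + 2*s) / 2))
  have hP : Integrable P := Integrable.of_mul_integral_eq_one (hnorm y hy)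
  have hmass : ∫ ξ, cns * P (x - ξ) = 1 := by
    rw [integral_const_mul, integral_sub_left_eq_self P, hnorm y hy]
  have hbound := abs_setIntegral_mul_le
    (S := {ξ : Euc n | ‖x‖ / 2 < ‖ξ‖ ∧ ‖ξ‖ < 3 * ‖x‖ / 2}) (measurable_norm measurableSet_Ioo)
    ((hP.comp_sub_left x).const_mul cns) (fun ξ => by positivity) (by positivity)
    (fun ξ hξ => abs_fderiv_u1_single_le_of_half_lt_norm (by linarith) hξ.1 i)
  rw [hmass, mul_one] at hbound
  simpa only [P, mul_assoc] using hbound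

/-- Poisson integral of the differentiated bubble on the middle region
(inequality (3.12)). -/
theorem poisson_integral_differentiated_bubble
    (n : ℕ) (hn : 1 ≤ n) (s : ℝ) (hs : s ∈ Ioo (0:ℝ) 1) (hns : 2 * s < (n:ℝ))
    (cns : ℝ) (hcns : 0 < cns)
    (hnorm : ∀ y : ℝ, 0 < y →
      cns * (∫ x : Euc n, y ^ (2*s) * (‖x‖ ^ 2 + y ^ 2) ^ (-(((n:ℝ) + 2*s) / 2))) = 1) :
    ∃ C > (0:ℝ), ∀ x : Euc n, x ≠ 0 → ∀ y : ℝ, 0 < y → ∀ i : Fin n,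
      |∫ ξ in {ξ : Euc n | ‖x‖ / 2 < ‖ξ‖ ∧ ‖ξ‖ < 3 * ‖x‖ / 2},
          (cns * y ^ (2*s) * (‖x - ξ‖ ^ 2 + y ^ 2) ^ (-(((n:ℝ) + 2*s) / 2))) *
            fderiv ℝ (u1 n s) ξ (EuclideanSpace.single i 1)|
        ≤ C * (1 + ‖x‖ ^ 2) ^ (-(((n:ℝ) - 2*s + 1) / 2)) :=
  poisson_integral_differentiated_bubble_general n s hns cns hcns hnorm
end
end
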